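/- arXiv:2407.11388 — 6 statements merged into one kernel-verified Lean document; each statement's English description precedes it below -/
import Mathlib

section
/- For any (x,a) ∈ D, if there exists an edge (x,y) ∈ E and a subset D'_ãc ⊆ D_ãc such that c_{xy}|_{(x,a)} ⊆ D'_ãc, then (x,a) ∈ D_ãc. (Lemma 1) -/
open Set

/-- The full domain `D = {(x,a) : a ∈ dom x}` of a binary CSP. -/
def fullDomain {X A : Type*} (dom : X → Finset A) : Set (X × A) :=
  {p | p.2 ∈ dom p.1}

/-- The support set `c_{xy}|_{(x,a)} = {(y,b) ∈ D : (a,b) ∈ rel x y}` of the pair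
`(x,a)` on the constraint `c_{xy}`. -/
def suppSet {X A : Type*} (dom : X → Finset A) (rel : X → X → Set (A × A))
    (x y : X) (a : A) : Set (X × A) :=
  {p | p.1 = y ∧ p.2 ∈ dom y ∧ (a, p.2) ∈ rel x y}

/-- A subset `D' ⊆ D` is arc consistent if for every `(x,a) ∈ D'` and every edge
`(x,y) ∈ E`, `c_{xy}|_{(x,a)} ∩ D' ≠ ∅`. -/
def ArcConsistent {X A : Type*} (dom : X → Finset A) (E : Set (X × X))
    (rel : X → X → Set (A × A)) (D' : Set (X × A)) : Prop :=
  D' ⊆ fullDomain dom ∧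
    ∀ p ∈ D', ∀ y, (p.1, y) ∈ E → (suppSet dom rel p.1 y p.2 ∩ D').Nonempty

/-- `D_ac`: the union of all arc consistent subsets of `D`. -/
def Dac {X A : Type*} (dom : X → Finset A) (E : Set (X × X))
    (rel : X → X → Set (A × A)) : Set (X × A) :=
  ⋃₀ {S | ArcConsistent dom E rel S}

/-- The recurrence: `D^(0) = ∅`, and
`D^(k+1) = D^(k) ∪ {(x,a) ∈ D : ∃ edge (x,y) ∈ E, c_{xy}|_{(x,a)} ⊆ D^(k)}`. -/
def acIter {X A : Type*} (dom : X → Finset A) (E : Set (X × X))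
    (rel : X → X → Set (A × A)) : ℕ → Set (X × A)
  | 0 => ∅
  | k + 1 => acIter dom E rel k ∪
      {p | p ∈ fullDomain dom ∧
        ∃ y, (p.1, y) ∈ E ∧ suppSet dom rel p.1 y p.2 ⊆ acIter dom E rel k}

/-- Lemma 1: for any `(x,a) ∈ D`, if there is an edge `(x,y) ∈ E`
and a subset `D' ⊆ D_ãc` with `c_{xy}|_{(x,a)} ⊆ D'`, then `(x,a) ∈ D_ãc`. -/
theorem mem_compl_Dac_of_supports_subset {X A : Type*} [Fintype X] [Fintype A]
    (dom : X → Finset A) (E : Set (X × X)) (rel : X → X → Set (A × A))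
    (x : X) (a : A) (hxa : (x, a) ∈ fullDomain dom)
    (h : ∃ y, (x, y) ∈ E ∧ ∃ D' : Set (X × A),
      D' ⊆ fullDomain dom \ Dac dom E rel ∧ suppSet dom rel x y a ⊆ D') :
    (x, a) ∈ fullDomain dom \ Dac dom E rel := by
  obtain ⟨y, hyE, D', hD', hsupp⟩ := h
  refine ⟨hxa, fun hmem => ?_⟩
  obtain ⟨S, hS, hxaS⟩ := hmem
  obtain ⟨q, hq, hqS⟩ := hS.2 (x, a) hxaS y hyE
  exact (hD' (hsupp hq)).2 ⟨S, hS, hqS⟩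
end

section
/- For every k ∈ ℕ, the iterate of the recurrence satisfies D^(k) ⊆ D_ãc. (Proposition 1, part 1) -/
open Set

/-- Proposition 1, part 1: every iterate of the recurrence is
contained in `D_ãc = D \ D_ac`. -/
theorem acIter_subset_compl_Dac {X A : Type*} [Fintype X] [Fintype A]
    (dom : X → Finset A) (E : Set (X × X)) (rel : X → X → Set (A × A)) :
    ∀ k : ℕ, acIter dom E rel k ⊆ fullDomain dom \ Dac dom E rel := by
  intro k
  induction k with
  | zero => simp [acIter]
  | succ k ih =>
    intro p hp
    rcases hp with hp | ⟨hpD, y, hyE, hsupp⟩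
    · exact ih hp
    · refine ⟨hpD, ?_⟩
      rintro ⟨S, hS, hpS⟩
      obtain ⟨q, hq1, hq2⟩ := hS.2 p hpS y hyE
      exact (ih (hsupp hq1)).2 ⟨S, hS, hq2⟩
end

section
/- If K ∈ ℕ satisfies {(x,a) ∈ D : there exists an edge (x,y) ∈ E with c_{xy}|_{(x,a)} ⊆ D^(K)} ⊆ D^(K), then D^(K) = D_ãc. (Proposition 1, part 2b) -/
open Set

/-- Proposition 1, part 2b: if
`{(x,a) ∈ D : ∃ edge (x,y) ∈ E, c_{xy}|_{(x,a)} ⊆ D^(K)} ⊆ D^(K)`,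
then `D^(K) = D_ãc`. -/
theorem acIter_eq_compl_Dac_of_closed {X A : Type*} [Fintype X] [Fintype A]
    (dom : X → Finset A) (E : Set (X × X)) (rel : X → X → Set (A × A)) (K : ℕ)
    (hK : {p : X × A | p ∈ fullDomain dom ∧
        ∃ y, (p.1, y) ∈ E ∧ suppSet dom rel p.1 y p.2 ⊆ acIter dom E rel K} ⊆
      acIter dom E rel K) :
    acIter dom E rel K = fullDomain dom \ Dac dom E rel := by
  have hsub : ∀ k, acIter dom E rel k ⊆ fullDomain dom := by
    intro k
    induction k with
    | zero => simp [acIter]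
    | succ k ih =>
      intro p hp
      rcases hp with hp | hp
      · exact ih hp
      · exact hp.1
  have hdisj : ∀ k, ∀ S, ArcConsistent dom E rel S → ∀ p ∈ acIter dom E rel k, p ∉ S := by
    intro k
    induction k with
    | zero => intro S _ p hp; simp [acIter] at hp
    | succ k ih =>
      intro S hS p hp hpS
      rcases hp with hp | hp
      · exact ih S hS p hp hpS
      · obtain ⟨_, y, hy, hsupp⟩ := hp
        obtain ⟨q, hq1, hq2⟩ := hS.2 p hpS y hy
        exact ih S hS q (hsupp hq1) hq2
  have hac : ArcConsistent dom E rel (fullDomain dom \ acIter dom E rel K) := by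
    constructor
    · exact fun p hp => hp.1
    · intro p hp y hy
      by_contra hne
      rw [Set.not_nonempty_iff_eq_empty] at hne
      have hsupp : suppSet dom rel p.1 y p.2 ⊆ acIter dom E rel K := by
        intro q hq
        by_contra hqn
        have hqD : q ∈ fullDomain dom := by
          rcases hq with ⟨h1, h2, _⟩
          simpa [fullDomain, h1] using h2
        exact (Set.eq_empty_iff_forall_notMem.mp hne) q ⟨hq, hqD, hqn⟩
      exact hp.2 (hK ⟨hp.1, y, hy, hsupp⟩)
  ext p
  constructor
  · intro hp
    refine ⟨hsub K hp, ?_⟩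
    intro hpd
    obtain ⟨S, hS, hpS⟩ := hpd
    exact hdisj K S hS p hp hpS
  · rintro ⟨hpD, hpd⟩
    by_contra hp
    exact hpd ⟨_, hac, hpD, hp⟩
end

section
/- If D^(K) = D^(K+1) for some K ∈ ℕ, then D^(k) = D^(K) for all k ≥ K, and the recurrence terminates with D_ac = D \ D^(K). -/
open Set

/-- if `D^(K) = D^(K+1)`, then `D^(k) = D^(K)` for all `k ≥ K`, and
the recurrence terminates with `D_ac = D \ D^(K)`. -/
theorem acIter_stabilizes {X A : Type*} [Fintype X] [Fintype A]
    (dom : X → Finset A) (E : Set (X × X)) (rel : X → X → Set (A × A)) (K : ℕ)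
    (hK : acIter dom E rel K = acIter dom E rel (K + 1)) :
    (∀ k : ℕ, K ≤ k → acIter dom E rel k = acIter dom E rel K) ∧
      Dac dom E rel = fullDomain dom \ acIter dom E rel K := by

  -- stabilization
  have stab : ∀ k : ℕ, K ≤ k → acIter dom E rel k = acIter dom E rel K := by
    intro k hk
    induction k with
    | zero =>
      have : K = 0 := Nat.le_zero.mp hk
      rw [this]
    | succ n ih =>
      rcases Nat.lt_or_ge K (n+1) with h | h
      · have hn : K ≤ n := Nat.lt_succ_iff.mp h
        have hne := ih hn
        calc acIter dom E rel (n+1)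
            = acIter dom E rel K ∪
              {p | p ∈ fullDomain dom ∧
                ∃ y, (p.1, y) ∈ E ∧ suppSet dom rel p.1 y p.2 ⊆ acIter dom E rel K} := by
              show acIter dom E rel n ∪ _ = _
              rw [hne]
          _ = acIter dom E rel (K+1) := rfl
          _ = acIter dom E rel K := hK.symm
      · have : K = n + 1 := le_antisymm hk h
        rw [this]
  refine ⟨stab, ?_⟩
  -- any arc consistent set is disjoint from every acIter k
  have disj : ∀ S, ArcConsistent dom E rel S → ∀ k, ∀ p ∈ S, p ∉ acIter dom E rel k := by
    intro S hS k
    induction k with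
    | zero => intro p _ h; exact h
    | succ n ih =>
      intro p hp hmem
      rcases hmem with h | ⟨_, y, hy, hsupp⟩
      · exact ih p hp h
      · obtain ⟨q, hq1, hq2⟩ := hS.2 p hp y hy
        exact ih q hq2 (hsupp hq1)
  ext p
  constructor
  · rintro ⟨S, hS, hpS⟩
    exact ⟨hS.1 hpS, disj S hS K p hpS⟩
  · intro hp
    refine ⟨fullDomain dom \ acIter dom E rel K, ⟨diff_subset, ?_⟩, hp⟩
    intro q hq y hy
    by_contra hemp
    rw [Set.not_nonempty_iff_eq_empty] at hemp
    have hsub : suppSet dom rel q.1 y q.2 ⊆ acIter dom E rel K := by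
      intro r hr
      by_contra hr2
      have : r ∈ suppSet dom rel q.1 y q.2 ∩ (fullDomain dom \ acIter dom E rel K) :=
        ⟨hr, ⟨show r.2 ∈ dom r.1 from hr.1 ▸ hr.2.1, hr2⟩⟩
      rw [hemp] at this
      exact this
    have : q ∈ acIter dom E rel (K+1) := Or.inr ⟨hq.1, y, hy, hsub⟩
    rw [← hK] at this
    exact hq.2 this
end

section
/- The recurrence computes exactly the set of arc-inconsistent pairs: D_ãc = ⋃_{k ∈ ℕ} D^(k); equivalently, D_ac = D \ ⋃_{k ∈ ℕ} D^(k). (Correctness of recurrent arc consistency enforcement) -/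
open Set

lemma acIter_mono {X A : Type*} (dom : X → Finset A) (E : Set (X × X))
    (rel : X → X → Set (A × A)) : Monotone (acIter dom E rel) := by
  apply monotone_nat_of_le_succ
  intro k
  exact Set.subset_union_left

lemma acIter_subset_fullDomain {X A : Type*} (dom : X → Finset A) (E : Set (X × X))
    (rel : X → X → Set (A × A)) (k : ℕ) : acIter dom E rel k ⊆ fullDomain dom := by
  induction k with
  | zero => simp [acIter]
  | succ k ih =>
    intro p hp
    rcases hp with hp | hp
    · exact ih hp
    · exact hp.1

lemma Dac_arcConsistent {X A : Type*} (dom : X → Finset A) (E : Set (X × X))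
    (rel : X → X → Set (A × A)) : ArcConsistent dom E rel (Dac dom E rel) := by
  constructor
  · rintro p ⟨S, hS, hpS⟩
    exact hS.1 hpS
  · rintro p ⟨S, hS, hpS⟩ y hy
    obtain ⟨q, hq1, hq2⟩ := hS.2 p hpS y hy
    exact ⟨q, hq1, S, hS, hq2⟩

lemma acIter_disjoint_Dac {X A : Type*} (dom : X → Finset A) (E : Set (X × X))
    (rel : X → X → Set (A × A)) (k : ℕ) :
    ∀ p ∈ acIter dom E rel k, p ∉ Dac dom E rel := by
  induction k with
  | zero => simp [acIter]
  | succ k ih =>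
    rintro p (hp | ⟨_, y, hy, hsupp⟩) hpD
    · exact ih p hp hpD
    · obtain ⟨q, hq1, hq2⟩ := (Dac_arcConsistent dom E rel).2 p hpD y hy
      exact ih q (hsupp hq1) hq2

lemma compl_iUnion_arcConsistent {X A : Type*} [Fintype X] [Fintype A]
    (dom : X → Finset A) (E : Set (X × X)) (rel : X → X → Set (A × A)) :
    ArcConsistent dom E rel (fullDomain dom \ ⋃ k : ℕ, acIter dom E rel k) := by
  refine ⟨Set.diff_subset, ?_⟩
  rintro p ⟨hpD, hpU⟩ y hy
  by_contra hne
  rw [Set.not_nonempty_iff_eq_empty] at hne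
  -- every element of suppSet is in the union
  have hsub : suppSet dom rel p.1 y p.2 ⊆ ⋃ k : ℕ, acIter dom E rel k := by
    intro q hq
    by_contra hqU
    have hqD : q ∈ fullDomain dom := by
      show q.2 ∈ dom q.1
      rw [hq.1]; exact hq.2.1
    have : q ∈ suppSet dom rel p.1 y p.2 ∩ (fullDomain dom \ ⋃ k : ℕ, acIter dom E rel k) :=
      ⟨hq, hqD, hqU⟩
    rw [hne] at this
    exact this
  -- finitely many elements, pick a uniform bound
  have hfin : (suppSet dom rel p.1 y p.2).Finite := Set.toFinite _
  have hN : ∃ N, suppSet dom rel p.1 y p.2 ⊆ acIter dom E rel N := by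
    have h : ∀ q : X × A, ∃ n, q ∈ suppSet dom rel p.1 y p.2 → q ∈ acIter dom E rel n := by
      intro q
      by_cases hq : q ∈ suppSet dom rel p.1 y p.2
      · obtain ⟨n, hn⟩ := Set.mem_iUnion.mp (hsub hq)
        exact ⟨n, fun _ => hn⟩
      · exact ⟨0, fun h' => absurd h' hq⟩
    choose f hf using h
    refine ⟨Finset.univ.sup f, fun q hq => ?_⟩
    exact acIter_mono dom E rel (Finset.le_sup (Finset.mem_univ q)) (hf q hq)
  obtain ⟨N, hNs⟩ := hN
  apply hpU
  exact Set.mem_iUnion.mpr ⟨N + 1, Or.inr ⟨hpD, y, hy, hNs⟩⟩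

/-- correctness of recurrent AC enforcement:
`D_ãc = ⋃_{k ∈ ℕ} D^(k)`; equivalently `D_ac = D \ ⋃_{k ∈ ℕ} D^(k)`. -/
theorem compl_Dac_eq_iUnion_acIter {X A : Type*} [Fintype X] [Fintype A]
    (dom : X → Finset A) (E : Set (X × X)) (rel : X → X → Set (A × A)) :
    (fullDomain dom \ Dac dom E rel = ⋃ k : ℕ, acIter dom E rel k) ∧
      Dac dom E rel = fullDomain dom \ ⋃ k : ℕ, acIter dom E rel k := by
  have hsub : fullDomain dom \ ⋃ k : ℕ, acIter dom E rel k ⊆ Dac dom E rel := by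
    intro p hp
    exact ⟨_, compl_iUnion_arcConsistent dom E rel, hp⟩
  have hDacD : Dac dom E rel ⊆ fullDomain dom := (Dac_arcConsistent dom E rel).1
  have h1 : fullDomain dom \ Dac dom E rel = ⋃ k : ℕ, acIter dom E rel k := by
    ext p
    constructor
    · rintro ⟨hpD, hpDac⟩
      by_contra hpU
      exact hpDac (hsub ⟨hpD, hpU⟩)
    · intro hp
      obtain ⟨k, hk⟩ := Set.mem_iUnion.mp hp
      exact ⟨acIter_subset_fullDomain dom E rel k hk, acIter_disjoint_Dac dom E rel k p hk⟩
  refine ⟨h1, ?_⟩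
  ext p
  constructor
  · intro hp
    refine ⟨hDacD hp, ?_⟩
    intro hpU
    obtain ⟨k, hk⟩ := Set.mem_iUnion.mp hpU
    exact acIter_disjoint_Dac dom E rel k p hk hp
  · exact fun hp => hsub hp
end

section
/- D_ãc is the least subset of D closed under the inconsistency operator: for every S ⊆ D, if {(x,a) ∈ D : there exists an edge (x,y) ∈ E with c_{xy}|_{(x,a)} ⊆ S} ⊆ S, then D_ãc ⊆ S. -/
open Set

/-- `D_ãc` is the least subset of `D` closed under the
inconsistency operator: for every `S ⊆ D`, if
`{(x,a) ∈ D : ∃ edge (x,y) ∈ E, c_{xy}|_{(x,a)} ⊆ S} ⊆ S`, then `D_ãc ⊆ S`. -/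
theorem compl_Dac_least_closed {X A : Type*} [Fintype X] [Fintype A]
    (dom : X → Finset A) (E : Set (X × X)) (rel : X → X → Set (A × A)) :
    ∀ S : Set (X × A), S ⊆ fullDomain dom →
      {p : X × A | p ∈ fullDomain dom ∧
          ∃ y, (p.1, y) ∈ E ∧ suppSet dom rel p.1 y p.2 ⊆ S} ⊆ S →
      fullDomain dom \ Dac dom E rel ⊆ S := by
  intro S _hS hclosed p hp
  by_contra hpS
  have hac : ArcConsistent dom E rel (fullDomain dom \ S) := by
    constructor
    · exact diff_subset
    · intro q hq y hy
      by_contra hne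
      rw [Set.not_nonempty_iff_eq_empty] at hne
      apply hq.2
      apply hclosed
      refine ⟨hq.1, y, hy, ?_⟩
      intro r hr
      by_contra hrS
      have hrD : r ∈ fullDomain dom := by
        have := hr.2.1
        simpa [fullDomain, hr.1] using this
      have : r ∈ suppSet dom rel q.1 y q.2 ∩ (fullDomain dom \ S) :=
        ⟨hr, hrD, hrS⟩
      rw [hne] at this
      exact this
  exact hp.2 ⟨_, hac, ⟨hp.1, hpS⟩⟩
end
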